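/- arXiv:1005.3597 — 3 statements merged into one kernel-verified Lean document; each statement's English description precedes it below -/
import Mathlib

section
/- If the equivalence relation E on ℕ+ has a single equivalence class (i.e., E c 1 for every positive integer c), then N_{p,q} = ⊤, equivalently the quotient group H_{p,q} = G ⧸ N_{p,q} is trivial. -/
abbrev G : Type := {x : ℚ // 0 < x}

def toG (c : ℕ+) : G := ⟨(c : ℚ), by exact_mod_cast c.pos⟩

def Cmap (p q : ℕ+) (c : ℕ+) : ℕ+ :=
  if h : (q : ℕ) ∣ (c : ℕ) then
    ⟨(c : ℕ) / (q : ℕ), Nat.div_pos (Nat.le_of_dvd c.pos h) q.pos⟩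
  else p * c + 1

def E (p q : ℕ+) : ℕ+ → ℕ+ → Prop := Relation.EqvGen (fun c d => d = Cmap p q c)

def Npq (p q : ℕ+) : Subgroup G :=
  Subgroup.closure ({toG q} ∪ {x : G | ∃ c d : ℕ+, E p q c d ∧ x = toG c / toG d})

theorem stmt4 (p q : ℕ+) (hp : 1 ≤ p) (hq : 2 ≤ q) (h : ∀ c : ℕ+, E p q c 1) :
    Npq p q = ⊤ ∧ Subsingleton (G ⧸ Npq p q) := by
  have h1 : toG 1 = 1 := by ext; simp [toG]
  have key : ∀ c : ℕ+, toG c ∈ Npq p q := by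
    intro c
    have : toG c / toG 1 ∈ Npq p q :=
      Subgroup.subset_closure (Or.inr ⟨c, 1, h c, rfl⟩)
    simpa [h1] using this
  have htop : Npq p q = ⊤ := by
    rw [Subgroup.eq_top_iff']
    intro x
    obtain ⟨r, hr⟩ := x
    have hn : 0 < r.num := Rat.num_pos.mpr hr
    set a : ℕ+ := ⟨r.num.toNat, by omega⟩
    set b : ℕ+ := ⟨r.den, r.pos⟩
    have hx : (⟨r, hr⟩ : G) = toG a / toG b := by
      ext
      show r = (a : ℚ) / (b : ℚ)
      have : ((a : ℕ) : ℚ) = (r.num : ℚ) := by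
        exact_mod_cast congrArg (fun z : ℤ => (z : ℚ)) (Int.toNat_of_nonneg hn.le)
      rw [this]
      exact (Rat.num_div_den r).symm
    rw [hx]
    exact div_mem (key a) (key b)
  refine ⟨htop, ?_⟩
  rw [htop]
  exact QuotientGroup.subsingleton_quotient_top
end

section
/- If every positive integer is equivalent to 1 under the division sequence C_{p,q}, then the quotient of ℚˣ by the subgroup generated by q together with all ratios c/d with E c d has order at most 3. -/
def toU (c : ℕ+) : ℚˣ := Units.mk0 (c : ℚ) (by exact_mod_cast c.pos.ne')

def NU (p q : ℕ+) : Subgroup ℚˣ :=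
  Subgroup.closure ({toU q} ∪ {x : ℚˣ | ∃ c d : ℕ+, E p q c d ∧ x = toU c / toU d})

lemma toU_one : toU 1 = 1 := by
  ext; simp [toU]

lemma toU_mem (p q : ℕ+) (h : ∀ c : ℕ+, E p q c 1) (c : ℕ+) : toU c ∈ NU p q := by
  have : toU c ∈ ({toU q} ∪ {x : ℚˣ | ∃ c d : ℕ+, E p q c d ∧ x = toU c / toU d}) := by
    right
    exact ⟨c, 1, h c, by simp [toU_one]⟩
  exact Subgroup.subset_closure this

lemma pos_mem (p q : ℕ+) (h : ∀ c : ℕ+, E p q c 1) (x : ℚˣ) (hx : 0 < (x : ℚ)) :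
    x ∈ NU p q := by
  have hnum : 0 < (x : ℚ).num := Rat.num_pos.mpr hx
  set a : ℕ+ := ⟨(x : ℚ).num.toNat, by omega⟩
  set b : ℕ+ := ⟨(x : ℚ).den, (x : ℚ).pos⟩
  have hcast : (((x : ℚ).num.toNat : ℕ) : ℚ) = ((x : ℚ).num : ℚ) := by
    exact_mod_cast Int.toNat_of_nonneg hnum.le
  have hx' : x = toU a / toU b := by
    ext
    rw [Units.val_div_eq_div_val]
    show (x : ℚ) = (((x : ℚ).num.toNat : ℕ) : ℚ) / (((x : ℚ).den : ℕ) : ℚ)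
    rw [hcast, Rat.num_div_den]
  rw [hx']
  exact div_mem (toU_mem p q h a) (toU_mem p q h b)

theorem stmt6 (p q : ℕ+) (hp : 1 ≤ p) (hq : 2 ≤ q) (h : ∀ c : ℕ+, E p q c 1) :
    Nat.card (ℚˣ ⧸ NU p q) ≤ 3 := by
  have hsurj : Function.Surjective
      (fun b : Bool => (QuotientGroup.mk (if b then (-1 : ℚˣ) else 1) : ℚˣ ⧸ NU p q)) := by
    intro z
    obtain ⟨x, rfl⟩ := QuotientGroup.mk_surjective z
    rcases lt_trichotomy (0 : ℚ) (x : ℚ) with hpos | hzero | hneg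
    · refine ⟨false, ?_⟩
      simp only [if_neg]
      symm
      rw [QuotientGroup.eq]
      simpa using pos_mem p q h x hpos
    · exact absurd hzero.symm x.ne_zero
    · refine ⟨true, ?_⟩
      simp only [if_pos]
      symm
      rw [QuotientGroup.eq]
      apply pos_mem p q h
      have : ((x⁻¹ * -1 : ℚˣ) : ℚ) = -((x : ℚ))⁻¹ := by simp
      rw [this]
      exact neg_pos.mpr (inv_lt_zero.mpr hneg)
  have : Nat.card (ℚˣ ⧸ NU p q) ≤ Nat.card Bool := by
    have : Finite (ℚˣ ⧸ NU p q) := Finite.of_surjective _ hsurj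
    exact Nat.card_le_card_of_surjective _ hsurj
  simpa using this.trans (by norm_num)
end

section
/- Suppose q' ≥ 2 and the positive rational q' lies in N_{p,q·q'}. Then N_{p,q} ≤ N_{p,q·q'}; consequently there is a surjective group homomorphism from H_{p,q} = G ⧸ N_{p,q} onto H_{p,q·q'} = G ⧸ N_{p,q·q'}. -/
/-! Since `E p q` is generated by the steps `c ↦ Cmap p q c`, a subgroup contains `Npq p q` as soon
as it contains `q` and every quotient `c / Cmap p q c`. If `q ∣ c` that quotient is `q`; otherwise
`q * q' ∤ c` as well, so `Cmap p q c = Cmap p (q * q') c` and the quotient is a generator of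
`Npq p (q * q')`. Finally `q = (q * q') / q'` lies in `Npq p (q * q')` by hypothesis. -/

lemma toG_mul (a b : ℕ+) : toG (a * b) = toG a * toG b :=
  Subtype.ext (by simp [toG])

lemma toG_mem_Npq (p q : ℕ+) : toG q ∈ Npq p q :=
  Subgroup.subset_closure (Or.inl rfl)

lemma toG_div_toG_mem_Npq {p q c d : ℕ+} (hcd : E p q c d) : toG c / toG d ∈ Npq p q :=
  Subgroup.subset_closure (Or.inr ⟨c, d, hcd, rfl⟩)

lemma toG_div_toG_mem_of_eqvGen {r : ℕ+ → ℕ+ → Prop} {N : Subgroup G}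
    (hr : ∀ c d, r c d → toG c / toG d ∈ N) {c d : ℕ+} (hcd : Relation.EqvGen r c d) :
    toG c / toG d ∈ N := by
  induction hcd with
  | rel c d h => exact hr c d h
  | refl c => simp
  | symm c d _ ih => simpa only [inv_div] using inv_mem ih
  | trans c d e _ _ ih₁ ih₂ => simpa only [div_mul_div_cancel] using mul_mem ih₁ ih₂

lemma Npq_le_of_mem {p q : ℕ+} {N : Subgroup G} (hq : toG q ∈ N)
    (hC : ∀ c, toG c / toG (Cmap p q c) ∈ N) : Npq p q ≤ N := by
  rw [Npq, Subgroup.closure_le]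
  rintro x (rfl | ⟨c, d, hcd, rfl⟩)
  · exact hq
  · exact toG_div_toG_mem_of_eqvGen (fun c d h => h ▸ hC c) hcd

lemma toG_div_toG_Cmap_of_dvd (p : ℕ+) {q c : ℕ+} (h : (q : ℕ) ∣ c) :
    toG c / toG (Cmap p q c) = toG q := by
  obtain ⟨k, hk⟩ := h
  have hk_pos : 0 < k := Nat.pos_of_mul_pos_left (hk ▸ c.pos)
  have hC : ((Cmap p q c : ℕ) : ℚ) = k := by
    simp [Cmap, hk, Nat.mul_div_cancel_left k q.pos]
  apply Subtype.ext
  show (c : ℚ) / ((Cmap p q c : ℕ) : ℚ) = q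
  rw [hC, hk]
  push_cast
  field_simp

lemma Cmap_mul_of_not_dvd (p q q' : ℕ+) {c : ℕ+} (h : ¬ (q : ℕ) ∣ c) :
    Cmap p (q * q') c = Cmap p q c := by
  have h' : ¬ ((q * q' : ℕ+) : ℕ) ∣ (c : ℕ) := fun hqq' =>
    h (dvd_trans (by simp) hqq')
  simp only [Cmap, h, h', ↓reduceDIte]

lemma Npq_le_Npq_mul {p q q' : ℕ+} (h : toG q' ∈ Npq p (q * q')) :
    Npq p q ≤ Npq p (q * q') := by
  have hq : toG q ∈ Npq p (q * q') := by
    simpa [toG_mul] using div_mem (toG_mem_Npq p (q * q')) h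
  refine Npq_le_of_mem hq fun c => ?_
  by_cases hc : (q : ℕ) ∣ c
  · rwa [toG_div_toG_Cmap_of_dvd p hc]
  · rw [← Cmap_mul_of_not_dvd p q q' hc]
    exact toG_div_toG_mem_Npq (Relation.EqvGen.rel _ _ rfl)

theorem stmt10_general (p q q' : ℕ+)
    (h : toG q' ∈ Npq p (q * q')) :
    Npq p q ≤ Npq p (q * q') ∧
      ∃ f : (G ⧸ Npq p q) →* (G ⧸ Npq p (q * q')), Function.Surjective f := by
  have hle := Npq_le_Npq_mul h
  refine ⟨hle, QuotientGroup.lift _ (QuotientGroup.mk' _) (by rwa [QuotientGroup.ker_mk']), ?_⟩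
  exact QuotientGroup.lift_surjective_of_surjective _ _ (QuotientGroup.mk'_surjective _) _

theorem stmt10 (p q q' : ℕ+) (hp : 1 ≤ p) (hq : 2 ≤ q) (hq' : 2 ≤ q')
    (h : toG q' ∈ Npq p (q * q')) :
    Npq p q ≤ Npq p (q * q') ∧
      ∃ f : (G ⧸ Npq p q) →* (G ⧸ Npq p (q * q')), Function.Surjective f :=
  stmt10_general p q q' h
end
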